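/- For the forward–backward algorithm with deviations, the series Σ_{n≥0} (1 − ζ_n)ℓ_n² converges; consequently ℓ_n² → 0, ‖u_n‖ → 0 and ‖v_n‖ → 0 as n → ∞. -/

import Mathlib

/-!
Fix a zero `w` of `A + C`. Monotonicity of `A`, cocoercivity of `C` and Young's inequality,
combined with an exact quadratic identity, show that
`φₙ = ‖xₙ - w‖²_M + κᵤ‖uₙ‖²_M + κᵥ‖vₙ‖²_M` satisfies `φₙ₊₁ + (1 - ζₙ) ℓₙ² ≤ φₙ` once the
deviation condition bounds the new deviations by `ζₙ ℓₙ²`. Telescoping gives summability, and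
`1 - ζₙ ≥ ε` gives `ℓₙ² → 0`. The weights `κᵤ, κᵥ` stay above a positive constant, so the
deviation condition then forces `uₙ, vₙ → 0`.
-/

open Filter
open scoped RealInnerProductSpace Pointwise Topology

/-- The `M`-induced norm `‖w‖_M = √⟪w, M w⟫`. -/
noncomputable def mnorm {H : Type*} [NormedAddCommGroup H] [InnerProductSpace ℝ H]
    (M : H →L[ℝ] H) (w : H) : ℝ :=
  Real.sqrt ⟪w, M w⟫

structure AdmissibleStep (ε β γ lam : ℝ) : Prop where
  ε_pos : 0 < ε
  ε_lt_one : ε < 1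
  β_pos : 0 < β
  le_γ : ε ≤ γ
  le_lam : ε ≤ lam
  lam_le : lam ≤ 2 - γ * β / 2 - ε / 2

namespace AdmissibleStep

variable {ε β γ lam : ℝ}

theorem γ_pos (h : AdmissibleStep ε β γ lam) : 0 < γ := h.ε_pos.trans_le h.le_γ

theorem lam_pos (h : AdmissibleStep ε β γ lam) : 0 < lam := h.ε_pos.trans_le h.le_lam

theorem four_sub_pos (h : AdmissibleStep ε β γ lam) : 0 < 4 - 2 * lam - γ * β := by
  have := h.lam_le; have := h.ε_pos; linarith

theorem le_two_sub (h : AdmissibleStep ε β γ lam) : 7 * ε / 8 ≤ 2 - lam * γ * β := by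
  -- `lam γβ ≤ (2 - γβ/2 - ε/2) γβ ≤ (2 - ε/2)² / 2 = 2 - ε + ε²/8`
  have hγβ : 0 ≤ γ * β := (mul_pos h.γ_pos h.β_pos).le
  have := mul_le_mul_of_nonneg_right h.lam_le hγβ
  nlinarith [sq_nonneg (γ * β - 2 + ε / 2), h.ε_pos, h.ε_lt_one]

theorem two_sub_pos (h : AdmissibleStep ε β γ lam) : 0 < 2 - lam * γ * β :=
  lt_of_lt_of_le (by linarith [h.ε_pos]) h.le_two_sub

theorem le_coeff_u (h : AdmissibleStep ε β γ lam) :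
    ε ^ 2 * β / 2 ≤ lam * γ * β / (2 - lam * γ * β) := by
  have hprod : ε ^ 2 * β ≤ lam * γ * β := by
    have := mul_le_mul h.le_lam h.le_γ h.ε_pos.le h.lam_pos.le
    nlinarith [h.β_pos]
  rw [le_div_iff₀ h.two_sub_pos]
  nlinarith [h.two_sub_pos, mul_pos (pow_pos h.ε_pos 2) h.β_pos]

theorem le_coeff_v (h : AdmissibleStep ε β γ lam) :
    7 * ε ^ 2 / 32 ≤ lam * (2 - lam * γ * β) / (4 - 2 * lam - γ * β) := by
  have hnum : ε * (7 * ε / 8) ≤ lam * (2 - lam * γ * β) :=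
    mul_le_mul h.le_lam h.le_two_sub (by linarith [h.ε_pos]) h.lam_pos.le
  have hden : 4 - 2 * lam - γ * β ≤ 4 := by
    nlinarith [h.lam_pos, mul_pos h.γ_pos h.β_pos]
  rw [le_div_iff₀ h.four_sub_pos]
  nlinarith [h.ε_pos, h.four_sub_pos]

theorem coeff_u_nonneg (h : AdmissibleStep ε β γ lam) :
    0 ≤ lam * γ * β / (2 - lam * γ * β) :=
  (by have := h.β_pos; positivity : (0 : ℝ) ≤ ε ^ 2 * β / 2).trans h.le_coeff_u

theorem coeff_v_nonneg (h : AdmissibleStep ε β γ lam) :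
    0 ≤ lam * (2 - lam * γ * β) / (4 - 2 * lam - γ * β) :=
  (by positivity : (0 : ℝ) ≤ 7 * ε ^ 2 / 32).trans h.le_coeff_v

theorem coeff_ℓ_nonneg (h : AdmissibleStep ε β γ lam) : 0 ≤ lam * (4 - 2 * lam - γ * β) / 2 :=
  div_nonneg (mul_nonneg h.lam_pos.le h.four_sub_pos.le) zero_le_two

end AdmissibleStep

theorem summable_of_add_le_pred {φ a : ℕ → ℝ} (hφ : ∀ n, 0 ≤ φ n) (ha : ∀ n, 0 ≤ a n)
    (h : ∀ n, φ (n + 1) + a n ≤ φ n) : Summable a := by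
  have hpartial : ∀ n, ∑ i ∈ Finset.range n, a i + φ n ≤ φ 0 := by
    intro n
    induction n with
    | zero => simp
    | succ n ih => rw [Finset.sum_range_succ]; linarith [h n]
  exact summable_of_sum_range_le ha fun n => by linarith [hpartial n, hφ n]

theorem tendsto_zero_of_summable_one_sub_mul {ε : ℝ} (hε : 0 < ε) {ζ ℓ : ℕ → ℝ}
    (hζ : ∀ n, ζ n ≤ 1 - ε) (hℓ : ∀ n, 0 ≤ ℓ n) (hsum : Summable fun n => (1 - ζ n) * ℓ n) :
    Tendsto ℓ atTop (𝓝 0) := by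
  refine squeeze_zero hℓ (fun n => ?_) (by simpa using hsum.tendsto_atTop_zero.div_const ε)
  rw [le_div_iff₀ hε]
  nlinarith [hζ n, hℓ n]

section MetricInnerProduct

variable {H : Type*} [NormedAddCommGroup H] [InnerProductSpace ℝ H] {M Minv : H →L[ℝ] H}

theorem mnorm_sq (hM : ∀ a, 0 ≤ ⟪a, M a⟫) (a : H) : mnorm M a ^ 2 = ⟪a, M a⟫ :=
  Real.sq_sqrt (hM a)

theorem inner_inv_self_nonneg (hM : ∀ a, 0 ≤ ⟪a, M a⟫) (hMinv : ∀ a, M (Minv a) = a)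
    (a : H) : 0 ≤ ⟪a, Minv a⟫ := by
  simpa only [hMinv, real_inner_comm] using hM (Minv a)

/-- Young's inequality for the dual pair of norms `‖·‖_{M⁻¹}` and `‖·‖_M`. -/
theorem inner_inv_add_mul_inner_add_nonneg (hMsa : ∀ a b, ⟪M a, b⟫ = ⟪a, M b⟫)
    (hM : ∀ a, 0 ≤ ⟪a, M a⟫) (hMinv : ∀ a, M (Minv a) = a) (t : ℝ) (D P : H) :
    0 ≤ ⟪D, Minv D⟫ + t * ⟪D, P⟫ + t ^ 2 / 4 * ⟪P, M P⟫ := by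
  have h := hM (Minv D + (t / 2) • P)
  have e1 : ⟪Minv D, M (Minv D)⟫ = ⟪D, Minv D⟫ := by rw [hMinv, real_inner_comm]
  have e2 : ⟪Minv D, M P⟫ = ⟪D, P⟫ := by rw [← hMsa, hMinv]
  have e3 : ⟪P, M (Minv D)⟫ = ⟪D, P⟫ := by rw [hMinv, real_inner_comm]
  simp only [map_add, map_smul, inner_add_left, inner_add_right,
    real_inner_smul_left, real_inner_smul_right, e1, e2, e3] at h
  linarith

/-- Monotonicity of `A`, cocoercivity of `C` and Young's inequality at one forward–backward step,
tested against a zero `w` of `A + C`. -/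
theorem fb_step_inner_nonneg (hMsa : ∀ a b, ⟪M a, b⟫ = ⟪a, M b⟫) (hM : ∀ a, 0 ≤ ⟪a, M a⟫)
    (hMinv : ∀ a, M (Minv a) = a) {β γ : ℝ} (hβ : 0 < β) (hγ : 0 ≤ γ) {A : H → Set H}
    (hAmono : ∀ a b ua vb : H, ua ∈ A a → vb ∈ A b → ⟪ua - vb, a - b⟫ ≥ 0) {C : H → H}
    (hC : ∀ a b : H, ⟪C a - C b, a - b⟫ ≥ (1 / β) * mnorm Minv (C a - C b) ^ 2)
    {w y z p : H} (hw : -C w ∈ A w) (hp : M z - M p - γ • C y ∈ γ • A p) :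
    0 ≤ ⟪M (z - p), p - w⟫ + γ * β / 4 * ⟪p - y, M (p - y)⟫ := by
  obtain ⟨q, hq, hγq⟩ := Set.mem_smul_set.mp hp
  set D := C y - C w
  have hmono : 0 ≤ γ * ⟪q - -C w, p - w⟫ := mul_nonneg hγ (hAmono _ _ _ _ hq hw)
  have hres : γ • (q - -C w) = M (z - p) - γ • D := by
    rw [smul_sub, hγq, map_sub]; module
  have hsplit : ⟪D, p - w⟫ = ⟪D, p - y⟫ + ⟪D, y - w⟫ := by
    rw [← inner_add_right, sub_add_sub_cancel]
  have hcoco : ⟪D, Minv D⟫ ≤ β * ⟪D, y - w⟫ := by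
    have h := hC y w
    rw [mnorm_sq (inner_inv_self_nonneg hM hMinv)] at h
    rw [ge_iff_le, div_mul_eq_mul_div, one_mul, div_le_iff₀ hβ] at h
    linarith
  have hyoung := inner_inv_add_mul_inner_add_nonneg hMsa hM hMinv β D (p - y)
  rw [← real_inner_smul_left, hres, inner_sub_left, real_inner_smul_left, hsplit] at hmono
  have : 0 ≤ γ * (⟪D, Minv D⟫ + β * ⟪D, p - y⟫ + β ^ 2 / 4 * ⟪p - y, M (p - y)⟫) :=
    mul_nonneg hγ hyoung
  nlinarith [mul_le_mul_of_nonneg_left hcoco hγ]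

theorem fb_deviation_identity (hMsa : ∀ a b, ⟪M a, b⟫ = ⟪a, M b⟫) (l g b : ℝ) (d U V E : H) :
    ⟪d + l • (E - d - ((1 - l) * g * b) • U - (4 - 2 * l - g * b) • V),
      M (d + l • (E - d - ((1 - l) * g * b) • U - (4 - 2 * l - g * b) • V))⟫
      + l * (4 - 2 * l - g * b) / 2 *
        ⟪E - d + (l * g * b) • U - (2 * (1 - l)) • V,
          M (E - d + (l * g * b) • U - (2 * (1 - l)) • V)⟫
      + 2 * l * (⟪M (d + ((1 - l) * g * b) • U + (4 - 2 * l - g * b) • V - E), E⟫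
          + g * b / 4 * ⟪E - d - (2 - l * g * b) • U, M (E - d - (2 - l * g * b) • U)⟫)
    = ⟪d, M d⟫ + l * g * b * (2 - l * g * b) * ⟪U, M U⟫
        + l * (2 - l * g * b) * (4 - 2 * l - g * b) * ⟪V, M V⟫ := by
  have symm : ∀ a b : H, ⟪a, M b⟫ = ⟪b, M a⟫ := fun a b => by rw [real_inner_comm, hMsa]
  rw [hMsa _ E]
  simp only [map_add, map_sub, map_smul, inner_add_left, inner_add_right,
    inner_sub_left, inner_sub_right, real_inner_smul_left, real_inner_smul_right]
  rw [symm U d, symm V d, symm E d, symm V U, symm E U, symm E V]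
  ring

theorem fb_descent (hMsa : ∀ a b, ⟪M a, b⟫ = ⟪a, M b⟫) {l g b : ℝ} (hl : 0 ≤ l)
    (h2 : 2 - l * g * b ≠ 0) (h4 : 4 - 2 * l - g * b ≠ 0) {x u v y z p w x' e : H}
    (hy : y = x + u) (hz : z = x + ((1 - l) * g * b / (2 - l * g * b)) • u + v)
    (hx' : x' = x + l • (p - z))
    (he : e = p - x + (l * g * b / (2 - l * g * b)) • u - (2 * (1 - l) / (4 - 2 * l - g * b)) • v)
    (hres : 0 ≤ ⟪M (z - p), p - w⟫ + g * b / 4 * ⟪p - y, M (p - y)⟫) :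
    ⟪x' - w, M (x' - w)⟫ + l * (4 - 2 * l - g * b) / 2 * ⟪e, M e⟫
      ≤ ⟪x - w, M (x - w)⟫ + l * g * b / (2 - l * g * b) * ⟪u, M u⟫
        + l * (2 - l * g * b) / (4 - 2 * l - g * b) * ⟪v, M v⟫ := by
  -- with `u = (2 - lgb) U` and `v = (4 - 2l - gb) V` all coefficients become polynomial
  obtain ⟨U, rfl⟩ : ∃ U, u = (2 - l * g * b) • U := ⟨_, (smul_inv_smul₀ h2 u).symm⟩
  obtain ⟨V, rfl⟩ : ∃ V, v = (4 - 2 * l - g * b) • V := ⟨_, (smul_inv_smul₀ h4 v).symm⟩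
  subst hy hz hx' he
  have hidentity := fb_deviation_identity hMsa l g b (x - w) U V (p - w)
  simp only [smul_smul, div_mul_cancel₀ _ h2, div_mul_cancel₀ _ h4] at hres ⊢
  have ex' : x + l • (p - (x + ((1 - l) * g * b) • U + (4 - 2 * l - g * b) • V)) - w
      = x - w + l • (p - w - (x - w) - ((1 - l) * g * b) • U - (4 - 2 * l - g * b) • V) := by
    module
  have ee : p - x = p - w - (x - w) := (sub_sub_sub_cancel_right p x w).symm
  have ez : x + ((1 - l) * g * b) • U + (4 - 2 * l - g * b) • V - p
      = x - w + ((1 - l) * g * b) • U + (4 - 2 * l - g * b) • V - (p - w) := by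
    module
  have ey : p - (x + (2 - l * g * b) • U) = p - w - (x - w) - (2 - l * g * b) • U := by module
  rw [ez, ey] at hres
  rw [ex', ee]
  simp only [map_smul, real_inner_smul_left, real_inner_smul_right]
  have hκu : l * g * b / (2 - l * g * b) * ((2 - l * g * b) * ((2 - l * g * b) * ⟪U, M U⟫))
      = l * g * b * (2 - l * g * b) * ⟪U, M U⟫ := by field_simp
  have hκv : l * (2 - l * g * b) / (4 - 2 * l - g * b)
      * ((4 - 2 * l - g * b) * ((4 - 2 * l - g * b) * ⟪V, M V⟫))
      = l * (2 - l * g * b) * (4 - 2 * l - g * b) * ⟪V, M V⟫ := by field_simp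
  rw [hκu, hκv, ← hidentity]
  linarith [mul_nonneg (mul_nonneg zero_le_two hl) hres]

theorem tendsto_norm_zero_of_weighted_le {c κ₀ : ℝ} (hc : 0 < c) (hκ₀ : 0 < κ₀)
    (hMc : ∀ a, c * ‖a‖ ^ 2 ≤ ⟪a, M a⟫) {κ ℓ : ℕ → ℝ} {u : ℕ → H} (hκ : ∀ n, κ₀ ≤ κ n)
    (hle : ∀ n, κ (n + 1) * mnorm M (u (n + 1)) ^ 2 ≤ ℓ n)
    (hℓ : Tendsto ℓ atTop (𝓝 0)) : Tendsto (fun n => ‖u n‖) atTop (𝓝 0) := by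
  have hbound : ∀ n, ‖u (n + 1)‖ ≤ Real.sqrt (ℓ n / (c * κ₀)) := fun n => by
    have hM := hMc (u (n + 1))
    have hMnn : 0 ≤ ⟪u (n + 1), M (u (n + 1))⟫ := (by positivity : 0 ≤ c * _).trans hM
    have hle : κ (n + 1) * ⟪u (n + 1), M (u (n + 1))⟫ ≤ ℓ n := by
      simpa only [mnorm, Real.sq_sqrt hMnn] using hle n
    refine Real.le_sqrt_of_sq_le ((le_div_iff₀ (by positivity)).mpr ?_)
    nlinarith [mul_le_mul_of_nonneg_right (hκ (n + 1)) hMnn]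
  have hsqrt : Tendsto (fun n => Real.sqrt (ℓ n / (c * κ₀))) atTop (𝓝 0) := by
    simpa using (hℓ.div_const (c * κ₀)).sqrt
  exact (tendsto_add_atTop_iff_nat 1).mp
    (squeeze_zero (fun _ => norm_nonneg _) hbound hsqrt)

end MetricInnerProduct

theorem summability_and_vanishing_general
    {H : Type*} [NormedAddCommGroup H] [InnerProductSpace ℝ H]
    (M : H →L[ℝ] H)
    (hMsa : ∀ a b : H, ⟪M a, b⟫ = ⟪a, M b⟫)
    (hMpos : ∃ c > (0:ℝ), ∀ a : H, ⟪a, M a⟫ ≥ c * ‖a‖ ^ 2)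
    (Minv : H →L[ℝ] H)
    (hMinv₂ : ∀ a : H, M (Minv a) = a)
    (β : ℝ) (hβ : 0 < β)
    (A : H → Set H)
    (hAmono : ∀ a b ua vb : H, ua ∈ A a → vb ∈ A b → ⟪ua - vb, a - b⟫ ≥ 0)
    (C : H → H)
    (hC : ∀ a b : H, ⟪C a - C b, a - b⟫ ≥ (1 / β) * mnorm Minv (C a - C b) ^ 2)
    (hzer : ∃ w : H, -C w ∈ A w)
    (ε : ℝ) (hε0 : 0 < ε) (hε1 : ε < min 1 (4 / (3 + β)))
    (ζ γ lam : ℕ → ℝ)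
    (hζ : ∀ n, 0 ≤ ζ n ∧ ζ n ≤ 1 - ε)
    (hγ : ∀ n, ε ≤ γ n ∧ γ n ≤ (4 - 3 * ε) / β)
    (hlam : ∀ n, ε ≤ lam n ∧ lam n ≤ 2 - γ n * β / 2 - ε / 2)
    (x u v p y z : ℕ → H) (ℓsq : ℕ → ℝ)
    (hy : ∀ n, y n = x n + u n)
    (hz : ∀ n, z n = x n + (((1 - lam n) * γ n * β) / (2 - lam n * γ n * β)) • u n + v n)
    (hp : ∀ n, M (z n) - M (p n) - γ n • C (y n) ∈ γ n • A (p n))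
    (hx : ∀ n, x (n + 1) = x n + lam n • (p n - z n))
    (hℓ : ∀ n, ℓsq n = (lam n * (4 - 2 * lam n - γ n * β) / 2) *
      mnorm M (p n - x n + ((lam n * γ n * β) / (2 - lam n * γ n * β)) • u n
        - ((2 * (1 - lam n)) / (4 - 2 * lam n - γ n * β)) • v n) ^ 2)
    (hdev : ∀ n, (lam (n+1) * γ (n+1) * β / (2 - lam (n+1) * γ (n+1) * β)) * mnorm M (u (n+1)) ^ 2
        + (lam (n+1) * (2 - lam (n+1) * γ (n+1) * β) / (4 - 2 * lam (n+1) - γ (n+1) * β)) * mnorm M (v (n+1)) ^ 2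
        ≤ ζ n * ℓsq n)
    :
    Summable (fun n => (1 - ζ n) * ℓsq n) ∧
      Tendsto ℓsq atTop (𝓝 0) ∧
      Tendsto (fun n => ‖u n‖) atTop (𝓝 0) ∧
      Tendsto (fun n => ‖v n‖) atTop (𝓝 0) := by
  obtain ⟨w, hw⟩ := hzer
  obtain ⟨c, hc, hMc⟩ := hMpos
  have hM : ∀ a, 0 ≤ ⟪a, M a⟫ := fun a => (by positivity : 0 ≤ c * ‖a‖ ^ 2).trans (hMc a)
  have hadm : ∀ n, AdmissibleStep ε β (γ n) (lam n) := fun n =>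
    ⟨hε0, hε1.trans_le (min_le_left _ _), hβ, (hγ n).1, (hlam n).1, (hlam n).2⟩
  have hℓ_nonneg : ∀ n, 0 ≤ ℓsq n := fun n => by
    rw [hℓ n]; exact mul_nonneg (hadm n).coeff_ℓ_nonneg (sq_nonneg _)
  set φ : ℕ → ℝ := fun n => mnorm M (x n - w) ^ 2
    + lam n * γ n * β / (2 - lam n * γ n * β) * mnorm M (u n) ^ 2
    + lam n * (2 - lam n * γ n * β) / (4 - 2 * lam n - γ n * β) * mnorm M (v n) ^ 2
  have hφ_nonneg : ∀ n, 0 ≤ φ n := fun n => by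
    have := (hadm n).coeff_u_nonneg; have := (hadm n).coeff_v_nonneg; positivity
  have hdescent : ∀ n, φ (n + 1) + (1 - ζ n) * ℓsq n ≤ φ n := fun n => by
    have hstep := fb_descent hMsa (hadm n).lam_pos.le (hadm n).two_sub_pos.ne'
      (hadm n).four_sub_pos.ne' (hy n) (hz n) (hx n) rfl
      (fb_step_inner_nonneg hMsa hM hMinv₂ hβ (hadm n).γ_pos.le hAmono hC hw (hp n))
    have hdev := hdev n
    simp only [φ, hℓ n, mnorm_sq hM] at hstep hdev ⊢
    linarith
  have hsum := summable_of_add_le_pred hφ_nonneg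
    (fun n => mul_nonneg (by linarith [(hζ n).2]) (hℓ_nonneg n)) hdescent
  have hℓ_lim := tendsto_zero_of_summable_one_sub_mul hε0 (fun n => (hζ n).2) hℓ_nonneg hsum
  have hζℓ : ∀ n, ζ n * ℓsq n ≤ ℓsq n := fun n => by nlinarith [(hζ n).2, hℓ_nonneg n]
  refine ⟨hsum, hℓ_lim,
    tendsto_norm_zero_of_weighted_le hc (by positivity) hMc (fun n => (hadm n).le_coeff_u)
      (fun n => ?_) hℓ_lim,
    tendsto_norm_zero_of_weighted_le hc (by positivity) hMc (fun n => (hadm n).le_coeff_v)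
      (fun n => ?_) hℓ_lim⟩
  · linarith [hdev n, hζℓ n,
      mul_nonneg (hadm (n + 1)).coeff_v_nonneg (sq_nonneg (mnorm M (v (n + 1))))]
  · linarith [hdev n, hζℓ n,
      mul_nonneg (hadm (n + 1)).coeff_u_nonneg (sq_nonneg (mnorm M (u (n + 1))))]

/-- summability of (1 − ζ_n)ℓ_n² and vanishing of ℓ_n², u_n, v_n. -/
theorem summability_and_vanishing
    {H : Type*} [NormedAddCommGroup H] [InnerProductSpace ℝ H] [CompleteSpace H]
    (M : H →L[ℝ] H)
    (hMsa : ∀ a b : H, ⟪M a, b⟫ = ⟪a, M b⟫)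
    (hMpos : ∃ c > (0:ℝ), ∀ a : H, ⟪a, M a⟫ ≥ c * ‖a‖ ^ 2)
    (Minv : H →L[ℝ] H)
    (hMinv₁ : ∀ a : H, Minv (M a) = a)
    (hMinv₂ : ∀ a : H, M (Minv a) = a)
    (β : ℝ) (hβ : 0 < β)
    (A : H → Set H)
    (hAmono : ∀ a b ua vb : H, ua ∈ A a → vb ∈ A b → ⟪ua - vb, a - b⟫ ≥ 0)
    (hAmax : ∀ a ua : H, (∀ b vb : H, vb ∈ A b → ⟪ua - vb, a - b⟫ ≥ 0) → ua ∈ A a)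
    (C : H → H)
    (hC : ∀ a b : H, ⟪C a - C b, a - b⟫ ≥ (1 / β) * mnorm Minv (C a - C b) ^ 2)
    (hzer : ∃ w : H, -C w ∈ A w)
    (ε : ℝ) (hε0 : 0 < ε) (hε1 : ε < min 1 (4 / (3 + β)))
    (ζ γ lam : ℕ → ℝ)
    (hζ : ∀ n, 0 ≤ ζ n ∧ ζ n ≤ 1 - ε)
    (hγ : ∀ n, ε ≤ γ n ∧ γ n ≤ (4 - 3 * ε) / β)
    (hlam : ∀ n, ε ≤ lam n ∧ lam n ≤ 2 - γ n * β / 2 - ε / 2)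
    (x u v p y z : ℕ → H) (ℓsq : ℕ → ℝ)
    (hu0 : u 0 = 0) (hv0 : v 0 = 0)
    (hy : ∀ n, y n = x n + u n)
    (hz : ∀ n, z n = x n + (((1 - lam n) * γ n * β) / (2 - lam n * γ n * β)) • u n + v n)
    (hp : ∀ n, M (z n) - M (p n) - γ n • C (y n) ∈ γ n • A (p n))
    (hx : ∀ n, x (n + 1) = x n + lam n • (p n - z n))
    (hℓ : ∀ n, ℓsq n = (lam n * (4 - 2 * lam n - γ n * β) / 2) *
      mnorm M (p n - x n + ((lam n * γ n * β) / (2 - lam n * γ n * β)) • u n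
        - ((2 * (1 - lam n)) / (4 - 2 * lam n - γ n * β)) • v n) ^ 2)
    (hdev : ∀ n, (lam (n+1) * γ (n+1) * β / (2 - lam (n+1) * γ (n+1) * β)) * mnorm M (u (n+1)) ^ 2
        + (lam (n+1) * (2 - lam (n+1) * γ (n+1) * β) / (4 - 2 * lam (n+1) - γ (n+1) * β)) * mnorm M (v (n+1)) ^ 2
        ≤ ζ n * ℓsq n)
    :
    Summable (fun n => (1 - ζ n) * ℓsq n) ∧
      Tendsto ℓsq atTop (𝓝 0) ∧
      Tendsto (fun n => ‖u n‖) atTop (𝓝 0) ∧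
      Tendsto (fun n => ‖v n‖) atTop (𝓝 0) :=
  summability_and_vanishing_general M hMsa hMpos Minv hMinv₂ β hβ A hAmono C hC hzer ε hε0 hε1 ζ γ
    lam hζ hγ hlam x u v p y z ℓsq hy hz hp hx hℓ hdev
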